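/- Let M = ⟨F, ev⟩ be a Veltman model on F = ⟨W, R, {S_w | w ∈ W}⟩ and M^ue its ultrafilter extension. Then for every formula φ, every world x ∈ W, and every element ⟨Π_x, σ⟩ of W^ue whose first component is the principal ultrafilter Π_x = {A ⊆ W | x ∈ A}: M, x ⊩ φ if and only if M^ue, ⟨Π_x, σ⟩ ⊩ φ. -/

import Mathlib

/-- Formulas of interpretability logic. -/
inductive ILFormula : Type where
  | atom : ℕ → ILFormula
  | falsum : ILFormula
  | impl : ILFormula → ILFormula → ILFormula
  | box : ILFormula → ILFormula
  | rhd : ILFormula → ILFormula → ILFormula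
  deriving DecidableEq

namespace ILFormula
def neg (α : ILFormula) : ILFormula := impl α falsum
def dia (α : ILFormula) : ILFormula := neg (box (neg α))
def conj (α β : ILFormula) : ILFormula := neg (impl α (neg β))
def disj (α β : ILFormula) : ILFormula := impl (neg α) β
end ILFormula

open ILFormula

/-- The Hilbert calculus IL: classical propositional logic plus K, GL, J1–J5,
    with modus ponens and necessitation. -/
inductive ILProv : ILFormula → Prop where
  | imp1 (α β) : ILProv (impl α (impl β α))
  | imp2 (α β γ) : ILProv (impl (impl α (impl β γ)) (impl (impl α β) (impl α γ)))
  | dne (α) : ILProv (impl (impl (impl α falsum) falsum) α)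
  | axK (α β) : ILProv (impl (box (impl α β)) (impl (box α) (box β)))
  | axGL (α) : ILProv (impl (box (impl (box α) α)) (box α))
  | axJ1 (α β) : ILProv (impl (box (impl α β)) (rhd α β))
  | axJ2 (α β γ) : ILProv (impl (conj (rhd α β) (rhd β γ)) (rhd α γ))
  | axJ3 (α β γ) : ILProv (impl (conj (rhd α γ) (rhd β γ)) (rhd (disj α β) γ))
  | axJ4 (α β) : ILProv (impl (rhd α β) (impl (dia α) (dia β)))
  | axJ5 (α) : ILProv (rhd (dia α) α)
  | mp {α β} : ILProv (impl α β) → ILProv α → ILProv β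
  | nec {α} : ILProv α → ILProv (box α)

/-- Derivability in IL from a finite set of hypotheses, with necessitation
    not applied to hypotheses. -/
inductive ILProvFrom (Γ : Finset ILFormula) : ILFormula → Prop where
  | hyp {φ} : φ ∈ Γ → ILProvFrom Γ φ
  | thm {φ} : ILProv φ → ILProvFrom Γ φ
  | mp {φ ψ} : ILProvFrom Γ (impl φ ψ) → ILProvFrom Γ φ → ILProvFrom Γ ψ

/-- A Veltman frame. -/
structure VeltmanFrame (W : Type*) : Type _ where
  nonempty : Nonempty W
  R : W → W → Prop
  S : W → W → W → Prop
  R_trans : ∀ {x y z}, R x y → R y z → R x z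
  R_cwf : ¬ ∃ c : ℕ → W, ∀ n, R (c n) (c (n + 1))
  S_dom : ∀ {w u v}, S w u v → R w u ∧ R w v
  S_refl : ∀ {w u}, R w u → S w u u
  S_trans : ∀ {w u v x}, S w u v → S w v x → S w u x
  R_sub_S : ∀ {w u v}, R w u → R w v → R u v → S w u v

variable {W : Type*}

def Rinv (F : VeltmanFrame W) (X : Set W) : Set W := {w | ∃ x ∈ X, F.R w x}

def Rinvhat (F : VeltmanFrame W) (Y : Set W) : Set W := {x | ∀ y, F.R x y → y ∈ Y}

def Sinv (F : VeltmanFrame W) (X Y : Set W) : Set W :=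
  {w | ∀ x ∈ X, F.R w x → ∃ y ∈ Y, F.S w x y}

/-- The algebraic interpretation of a formula in a Veltman frame under valuation `e`. -/
def interp (F : VeltmanFrame W) (e : ℕ → Set W) : ILFormula → Set W
  | .atom n => e n
  | .falsum => ∅
  | .impl α β => (interp F e α)ᶜ ∪ interp F e β
  | .box α => Rinvhat F (interp F e α)
  | .rhd α β => Sinv F (interp F e α) (interp F e β)

/-- Forcing in a Veltman model `⟨F, ev⟩`. -/
def forces (F : VeltmanFrame W) (ev : ℕ → Set W) : ILFormula → W → Prop
  | .atom n, w => w ∈ ev n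
  | .falsum, _ => False
  | .impl α β, w => forces F ev α w → forces F ev β w
  | .box α, w => ∀ v, F.R w v → forces F ev α v
  | .rhd α β, w => ∀ u, F.R w u → forces F ev α u → ∃ v, F.S w u v ∧ forces F ev β v

/-- The filter-assuring successor relation `f ≺_l g`. -/
def Assur (F : VeltmanFrame W) (l : Set (Set W)) (f g : Ultrafilter W) : Prop :=
  ∀ (A : Set W) (T : Finset (Set W)), (↑T : Set (Set W)) ⊆ l →
    Sinv F Aᶜ (⋃ S ∈ T, Sᶜ) ∈ f → A ∈ g ∧ Rinvhat F A ∈ g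

/-- A proper filter of subsets of `W`. -/
def IsProperFilter (l : Set (Set W)) : Prop :=
  l.Nonempty ∧ ∅ ∉ l ∧ (∀ A ∈ l, ∀ B : Set W, A ⊆ B → B ∈ l) ∧
    (∀ A ∈ l, ∀ B ∈ l, A ∩ B ∈ l)

/-- Worlds of the ultrafilter extension: an ultrafilter with a sequence of labels. -/
abbrev UEWorld (W : Type*) := Ultrafilter W × List (Set (Set W))

/-- The domain `W^ue` of the ultrafilter extension, generated inductively. -/
inductive InWue (F : VeltmanFrame W) : UEWorld W → Prop where
  | nil (f : Ultrafilter W) : InWue F (f, [])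
  | cons {f g : Ultrafilter W} {σ : List (Set (Set W))} {l : Set (Set W)} :
      InWue F (f, σ) → Assur F l f g → InWue F (g, σ ++ [l])

/-- The one-step relation of the ultrafilter extension. -/
def RueOne (F : VeltmanFrame W) (p q : UEWorld W) : Prop :=
  ∃ l : Set (Set W), q.2 = p.2 ++ [l] ∧ Assur F l p.1 q.1

/-- `R^ue`: the transitive closure of the one-step relation. -/
def Rue (F : VeltmanFrame W) : UEWorld W → UEWorld W → Prop :=
  Relation.TransGen (RueOne F)

/-- `S^ue_p`: the smallest reflexive transitive relation containing the
    restriction of `R^ue` to `R^ue[p]` and the one-step `S` relation. -/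
inductive Sue (F : VeltmanFrame W) (p : UEWorld W) : UEWorld W → UEWorld W → Prop where
  | refl (q) : Rue F p q → Sue F p q q
  | ofR {q r} : Rue F p q → Rue F p r → Rue F q r → Sue F p q r
  | one {q r} : Rue F p q → Rue F p r → q.2[p.2.length]? = r.2[p.2.length]? → Sue F p q r
  | trans {q r s} : Sue F p q r → Sue F p r s → Sue F p q s

/-- Forcing in the ultrafilter extension `M^ue`. -/
def ueForces (F : VeltmanFrame W) (ev : ℕ → Set W) : ILFormula → UEWorld W → Prop
  | .atom n, p => ev n ∈ p.1
  | .falsum, _ => False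
  | .impl α β, p => ueForces F ev α p → ueForces F ev β p
  | .box α, p => ∀ q : UEWorld W, InWue F q → Rue F p q → ueForces F ev α q
  | .rhd α β, p => ∀ q : UEWorld W, InWue F q → Rue F p q → ueForces F ev α q →
      ∃ r : UEWorld W, InWue F r ∧ Sue F p q r ∧ ueForces F ev β r

/-- Conjunction of a finite list of formulas (`⊤` for the empty list). -/
def conjList : List ILFormula → ILFormula
  | [] => impl falsum falsum
  | φ :: L => conj φ (conjList L)

/-- The Pencil frame condition. -/
def Pencil (F : VeltmanFrame W) : Prop :=
  ∀ x y z u v : W, F.R x y → F.S x y z → F.R z u → F.R y v → F.S x v u → F.R y u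

/-! Each modality has an algebraic counterpart in the ultrafilter extension: `□A` and `A ▷ B`
hold at a world `(f, σ)` of `W^ue` exactly when `Rinvhat A` and `Sinv A B` lie in `f`; for `f`
principal this is truth at the underlying world. The hard directions need a new successor
`(g, σ ++ [l])` with `A ∈ g`. The sets `C` that `f ≺_l g` must put into `g` (together with
`Rinvhat C`) form a directed family, so `g` exists as soon as every `A ∩ C ∩ Rinvhat C` is
nonempty; and if `A` missed `C ∩ Rinvhat C`, then `Sinv Cᶜ Y ⊆ Sinv A Y` would contradict the
assumption on `f`. For `□` one takes `l = ∅`; for `▷` either `l = {Bᶜ}`, which forces `Bᶜ` into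
every `S^ue`-related world, or the label of the first step towards the given successor, which
makes the new world `S^ue`-related to it. -/

theorem Ultrafilter.exists_forall_mem_of_directedOn {α : Type*} {𝒟 : Set (Set α)}
    (hne : 𝒟.Nonempty) (hdir : DirectedOn (· ⊇ ·) 𝒟) (h : ∀ D ∈ 𝒟, D.Nonempty) :
    ∃ g : Ultrafilter α, ∀ D ∈ 𝒟, D ∈ g := by
  have := hne.to_subtype
  let G : Filter α := ⨅ D : 𝒟, Filter.principal (D : Set α)
  have : G.NeBot :=
    Filter.iInf_neBot_of_directed' (Directed.mono_comp (· ⊇ ·) (rb := (· ≥ ·))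
      (g := Filter.principal) (fun _ _ hsub => Filter.principal_mono.2 hsub) hdir.directed_val)
      fun D => Filter.principal_neBot_iff.2 (h D D.2)
  exact ⟨Ultrafilter.of G, fun D hD =>
    Ultrafilter.of_le G (Filter.mem_iInf_of_mem (⟨D, hD⟩ : 𝒟) (Filter.mem_principal_self D))⟩

variable {F : VeltmanFrame W}

theorem Rinvhat_mono {C D : Set W} (h : C ⊆ D) : Rinvhat F C ⊆ Rinvhat F D :=
  fun _ hx y hy => h (hx y hy)

theorem Sinv_mono_right {X Y Y' : Set W} (h : Y ⊆ Y') : Sinv F X Y ⊆ Sinv F X Y' := by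
  intro w hw x hx hwx
  obtain ⟨y, hy, hs⟩ := hw x hx hwx
  exact ⟨y, h hy, hs⟩

theorem Sinv_empty_left (Y : Set W) : Sinv F ∅ Y = Set.univ := by
  ext w
  simp [Sinv]

theorem Sinv_union_left (X₁ X₂ Y : Set W) :
    Sinv F (X₁ ∪ X₂) Y = Sinv F X₁ Y ∩ Sinv F X₂ Y := by
  ext w
  simp only [Sinv, Set.mem_union, Set.mem_inter_iff, Set.mem_ofPred_eq]
  exact ⟨fun h => ⟨fun x hx => h x (.inl hx), fun x hx => h x (.inr hx)⟩,
    fun h x hx => hx.elim (h.1 x) (h.2 x)⟩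

theorem Sinv_self (X : Set W) : Sinv F X X = Set.univ :=
  Set.eq_univ_of_forall fun _ x hx hwx => ⟨x, hx, F.S_refl hwx⟩

theorem Sinv_inter_Sinv_subset (X Y Z : Set W) : Sinv F X Y ∩ Sinv F Y Z ⊆ Sinv F X Z := by
  rintro w ⟨hXY, hYZ⟩ x hx hwx
  obtain ⟨y, hy, hxy⟩ := hXY x hx hwx
  obtain ⟨z, hz, hyz⟩ := hYZ y hy (F.S_dom hxy).2
  exact ⟨z, hz, F.S_trans hxy hyz⟩

theorem Sinv_compl_empty (A : Set W) : Sinv F Aᶜ ∅ = Rinvhat F A := by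
  ext w
  simp only [Sinv, Rinvhat, Set.mem_compl_iff, Set.mem_empty_iff_false, false_and,
    exists_false, Set.mem_ofPred_eq]
  exact forall_congr' fun x => ⟨fun h hwx => not_not.1 fun hx => h hx hwx,
    fun h hx hwx => hx (h hwx)⟩

/-- A world of `X` outside `C ∩ Rinvhat C` either leaves `C` itself or sees a world outside `C`,
and in the second case `R ⊆ S_w` carries the `S_w`-witness back to it. -/
theorem Sinv_compl_subset_of_disjoint {X C : Set W} (Y : Set W)
    (h : Disjoint X (C ∩ Rinvhat F C)) : Sinv F Cᶜ Y ⊆ Sinv F X Y := by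
  intro w hw x hx hwx
  have hxC : x ∉ C ∨ ∃ z, F.R x z ∧ z ∉ C := by
    by_contra! hxC
    exact Set.disjoint_left.1 h hx ⟨hxC.1, hxC.2⟩
  rcases hxC with hxC | ⟨z, hxz, hzC⟩
  · exact hw x hxC hwx
  · have hwz := F.R_trans hwx hxz
    obtain ⟨y, hy, hzy⟩ := hw z hzC hwz
    exact ⟨y, hy, F.S_trans (F.R_sub_S hwx hwz hxz) hzy⟩

theorem Assur.mem_of_Rinvhat_mem {l : Set (Set W)} {f g : Ultrafilter W} (h : Assur F l f g)
    {E : Set W} (hE : Rinvhat F E ∈ f) : E ∈ g ∧ Rinvhat F E ∈ g :=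
  h E ∅ (by simp) (by simpa [Sinv_compl_empty] using hE)

theorem Assur.mem_of_mem {l : Set (Set W)} {f g : Ultrafilter W} (h : Assur F l f g)
    {S : Set W} (hS : S ∈ l) : S ∈ g ∧ Rinvhat F S ∈ g :=
  h S {S} (by simpa using hS) <| by
    rw [Finset.set_biUnion_singleton, Sinv_self]
    exact Filter.univ_mem

theorem exists_assur_mem {f : Ultrafilter W} {l : Set (Set W)} {A : Set W}
    (h : ∀ (C : Set W) (T : Finset (Set W)), (↑T : Set (Set W)) ⊆ l →
      Sinv F Cᶜ (⋃ S ∈ T, Sᶜ) ∈ f → ¬ Disjoint A (C ∩ Rinvhat F C)) :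
    ∃ g : Ultrafilter W, Assur F l f g ∧ A ∈ g := by
  set 𝒞 : Set (Set W) :=
    {C | ∃ T : Finset (Set W), (↑T : Set (Set W)) ⊆ l ∧ Sinv F Cᶜ (⋃ S ∈ T, Sᶜ) ∈ f}
  have huniv : Set.univ ∈ 𝒞 := ⟨∅, by simp, by
    rw [Set.compl_univ, Sinv_empty_left]
    exact Filter.univ_mem⟩
  have hdir : DirectedOn (· ⊇ ·) ((fun C => A ∩ (C ∩ Rinvhat F C)) '' 𝒞) := by
    refine directedOn_image.2 ?_
    rintro C₁ ⟨T₁, hT₁, h₁⟩ C₂ ⟨T₂, hT₂, h₂⟩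
    refine ⟨C₁ ∩ C₂, ⟨T₁ ∪ T₂, by simp [hT₁, hT₂], ?_⟩, ?_, ?_⟩
    · rw [Set.compl_inter, Sinv_union_left, Finset.set_biUnion_union]
      exact Filter.inter_mem (Filter.mem_of_superset h₁ (Sinv_mono_right Set.subset_union_left))
        (Filter.mem_of_superset h₂ (Sinv_mono_right Set.subset_union_right))
    · exact Set.inter_subset_inter_right _ (Set.inter_subset_inter Set.inter_subset_left
        (Rinvhat_mono Set.inter_subset_left))
    · exact Set.inter_subset_inter_right _ (Set.inter_subset_inter Set.inter_subset_right
        (Rinvhat_mono Set.inter_subset_right))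
  obtain ⟨g, hg⟩ := Ultrafilter.exists_forall_mem_of_directedOn ⟨_, Set.mem_image_of_mem _ huniv⟩
    hdir (by
      rintro _ ⟨C, ⟨T, hT, hC⟩, rfl⟩
      exact Set.not_disjoint_iff_nonempty_inter.1 (h C T hT hC))
  refine ⟨g, fun C T hT hC => ?_, ?_⟩
  · have hCg := hg _ (Set.mem_image_of_mem _ ⟨T, hT, hC⟩)
    exact ⟨Filter.mem_of_superset hCg fun _ hx => hx.2.1,
      Filter.mem_of_superset hCg fun _ hx => hx.2.2⟩
  · exact Filter.mem_of_superset (hg _ (Set.mem_image_of_mem _ huniv)) Set.inter_subset_left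

theorem Rue.exists_head {p q : UEWorld W} (h : Rue F p q) :
    ∃ (l : Set (Set W)) (g : Ultrafilter W), Assur F l p.1 g ∧ (∃ τ, q.2 = p.2 ++ l :: τ) ∧
      ∀ E, E ∈ g → Rinvhat F E ∈ g → E ∈ q.1 ∧ Rinvhat F E ∈ q.1 := by
  induction h with
  | single hpq =>
    obtain ⟨l, hq, hl⟩ := hpq
    exact ⟨l, _, hl, ⟨[], by simpa using hq⟩, fun E hE hRE => ⟨hE, hRE⟩⟩
  | tail _ hqr ih =>
    obtain ⟨l, g, hl, ⟨τ, hq⟩, hg⟩ := ih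
    obtain ⟨l', hr, hl'⟩ := hqr
    exact ⟨l, g, hl, ⟨τ ++ [l'], by simp [hr, hq]⟩,
      fun E hE hRE => hl'.mem_of_Rinvhat_mem (hg E hE hRE).2⟩

theorem Rue.mem_of_Rinvhat_mem {p q : UEWorld W} (h : Rue F p q) {E : Set W}
    (hE : Rinvhat F E ∈ p.1) : E ∈ q.1 := by
  obtain ⟨l, g, hl, -, hg⟩ := h.exists_head
  obtain ⟨hEg, hREg⟩ := hl.mem_of_Rinvhat_mem hE
  exact (hg E hEg hREg).1

theorem Sue.getElem?_length_eq {p q r : UEWorld W} (h : Sue F p q r) :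
    q.2[p.2.length]? = r.2[p.2.length]? := by
  induction h with
  | refl => rfl
  | ofR hpq _ hqr =>
    obtain ⟨l, -, -, ⟨τ, hq⟩, -⟩ := hpq.exists_head
    obtain ⟨l', -, -, ⟨τ', hr⟩, -⟩ := hqr.exists_head
    simp [hr, hq]
  | one _ _ h => exact h
  | trans _ _ ih₁ ih₂ => exact ih₁.trans ih₂

theorem InWue.mem_of_mem_label {r : UEWorld W} (hr : InWue F r) {i : ℕ} {l : Set (Set W)}
    (hi : r.2[i]? = some l) {S : Set W} (hS : S ∈ l) : S ∈ r.1 ∧ Rinvhat F S ∈ r.1 := by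
  induction hr with
  | nil => simp at hi
  | @cons f g σ l' _ hfg ih =>
    rw [List.getElem?_append] at hi
    split_ifs at hi
    · exact hfg.mem_of_Rinvhat_mem (ih hi).2
    · obtain ⟨-, rfl⟩ : i - σ.length = 0 ∧ l' = l := by simpa [List.getElem?_singleton] using hi
      exact hfg.mem_of_mem hS

theorem Rinvhat_mem_iff_forall_rue {p : UEWorld W} (hp : InWue F p) {A : Set W} :
    Rinvhat F A ∈ p.1 ↔ ∀ q, InWue F q → Rue F p q → A ∈ q.1 := by
  refine ⟨fun hA q _ hpq => hpq.mem_of_Rinvhat_mem hA, fun h => ?_⟩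
  by_contra hA
  obtain ⟨g, hg, hAg⟩ := exists_assur_mem (F := F) (f := p.1) (l := ∅) (A := Aᶜ)
    fun C T hT hC hdisj => by
    obtain rfl : T = ∅ := by simpa using hT
    simp only [Finset.notMem_empty, Set.iUnion_of_empty, Set.iUnion_empty, Sinv_compl_empty] at hC
    refine hA (Filter.mem_of_superset hC ?_)
    simpa only [Sinv_compl_empty] using Sinv_compl_subset_of_disjoint ∅ hdisj
  exact Ultrafilter.compl_mem_iff_notMem.1 hAg (h _ (hp.cons hg) (.single ⟨∅, rfl, hg⟩))

theorem Sinv_mem_of_forall_rue {p : UEWorld W} (hp : InWue F p) {A B : Set W}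
    (h : ∀ q, InWue F q → Rue F p q → A ∈ q.1 → ∃ r, InWue F r ∧ Sue F p q r ∧ B ∈ r.1) :
    Sinv F A B ∈ p.1 := by
  by_contra hAB
  obtain ⟨g, hg, hAg⟩ := exists_assur_mem (F := F) (f := p.1) (l := {Bᶜ}) (A := A)
    fun C T hT hC hdisj => by
    have hTB : (⋃ S ∈ T, Sᶜ) ⊆ B := Set.iUnion₂_subset fun S hS => by
      rw [show S = Bᶜ from hT hS, compl_compl]
    exact hAB (Filter.mem_of_superset hC
      ((Sinv_mono_right hTB).trans (Sinv_compl_subset_of_disjoint B hdisj)))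
  obtain ⟨r, hr, hqr, hBr⟩ := h _ (hp.cons hg) (.single ⟨{Bᶜ}, rfl, hg⟩) hAg
  have hlabel : r.2[p.2.length]? = some {Bᶜ} := by
    simpa using hqr.getElem?_length_eq.symm
  exact Ultrafilter.compl_mem_iff_notMem.1 (hr.mem_of_mem_label hlabel rfl).1 hBr

/-- If `B` missed `C ∩ Rinvhat C`, then `Sinv Aᶜᶜ U` would lie in `f`, so the first step
towards `q` would put `Aᶜ` into `q`. -/
theorem exists_sue_of_Sinv_mem {p : UEWorld W} (hp : InWue F p) {A B : Set W}
    (hAB : Sinv F A B ∈ p.1) {q : UEWorld W} (hpq : Rue F p q) (hAq : A ∈ q.1) :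
    ∃ r, InWue F r ∧ Sue F p q r ∧ B ∈ r.1 := by
  obtain ⟨l, g₁, hg₁, ⟨τ, hq⟩, hg₁q⟩ := hpq.exists_head
  obtain ⟨g, hg, hBg⟩ := exists_assur_mem (F := F) (f := p.1) (l := l) (A := B)
    fun C T hT hC hdisj => by
    have hAU : Sinv F Aᶜᶜ (⋃ S ∈ T, Sᶜ) ∈ p.1 := by
      rw [compl_compl]
      exact Filter.mem_of_superset (Filter.inter_mem hAB
        (Filter.mem_of_superset hC (Sinv_compl_subset_of_disjoint _ hdisj)))
        (Sinv_inter_Sinv_subset _ _ _)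
    obtain ⟨hAg₁, hRAg₁⟩ := hg₁ Aᶜ T hT hAU
    exact Ultrafilter.compl_mem_iff_notMem.1 (hg₁q _ hAg₁ hRAg₁).1 hAq
  exact ⟨(g, p.2 ++ [l]), hp.cons hg, .one hpq (.single ⟨l, rfl, hg⟩) (by simp [hq]), hBg⟩

theorem ueForces_iff_interp_mem (ev : ℕ → Set W) (φ : ILFormula) {p : UEWorld W}
    (hp : InWue F p) : ueForces F ev φ p ↔ interp F ev φ ∈ p.1 := by
  induction φ generalizing p with
  | atom n => rfl
  | falsum => simp [ueForces, interp]
  | impl α β ihα ihβ =>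
    rw [ueForces, interp, Ultrafilter.union_mem_iff, Ultrafilter.compl_mem_iff_notMem, ihα hp,
      ihβ hp, imp_iff_not_or]
  | box α ih =>
    rw [ueForces, interp, Rinvhat_mem_iff_forall_rue hp]
    exact forall_congr' fun q => forall_congr' fun hq => imp_congr_right fun _ => ih hq
  | rhd α β ihα ihβ =>
    rw [ueForces, interp]
    constructor
    · intro h
      refine Sinv_mem_of_forall_rue hp fun q hq hpq hαq => ?_
      obtain ⟨r, hr, hqr, hβr⟩ := h q hq hpq ((ihα hq).2 hαq)
      exact ⟨r, hr, hqr, (ihβ hr).1 hβr⟩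
    · intro h q hq hpq hαq
      obtain ⟨r, hr, hqr, hβr⟩ := exists_sue_of_Sinv_mem hp h hpq ((ihα hq).1 hαq)
      exact ⟨r, hr, hqr, (ihβ hr).2 hβr⟩

theorem forces_iff_mem_interp (ev : ℕ → Set W) (φ : ILFormula) (x : W) :
    forces F ev φ x ↔ x ∈ interp F ev φ := by
  induction φ generalizing x with
  | atom n => rfl
  | falsum => simp [forces, interp]
  | impl α β ihα ihβ =>
    rw [forces, interp, Set.mem_union, Set.mem_compl_iff, ihα, ihβ, imp_iff_not_or]
  | box α ih => exact forall_congr' fun v => imp_congr_right fun _ => ih v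
  | rhd α β ihα ihβ =>
    simp only [forces, interp, Sinv, Set.mem_ofPred_eq, ← ihα, ← ihβ]
    exact forall_congr' fun u => ⟨fun h hu hxu => (h hxu hu).imp fun _ => And.symm,
      fun h hxu hu => (h hu hxu).imp fun _ => And.symm⟩

/-- truth at a world x agrees with truth at any world of the
    ultrafilter extension whose first component is the principal ultrafilter Π_x. -/
theorem forces_iff_ueForces_principal {W : Type*} (F : VeltmanFrame W)
    (ev : ℕ → Set W) (φ : ILFormula) (x : W) (σ : List (Set (Set W)))
    (hin : InWue F ((pure x : Ultrafilter W), σ)) :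
    forces F ev φ x ↔ ueForces F ev φ ((pure x : Ultrafilter W), σ) := by
  rw [forces_iff_mem_interp, ueForces_iff_interp_mem ev φ hin, Ultrafilter.mem_pure]
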